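/- Let A be a C*-algebra, let a be a positive element of A, let e be a positive element of A_a, and let E' be a subset of A such that e x = x for all x ∈ E'. Then E' ⊆ E_{(e − 1/2)₊}, where (e − 1/2)₊ is the positive part of e − 1/2 defined by continuous functional calculus, i.e. (e − 1/2)₊ = f(e) with f(t) = max(t − 1/2, 0). -/

import Mathlib

/-!
With `f t = max (t - ε) 0` and `0 ≤ ε < 1`, one has `f t = (1 - ε) t + k(t) (t - 1)` for a continuous
`k` vanishing at `0`. If `e x = x` then `k(e) (e - 1) x = 0`, so `f(e) x = (1 - ε) x` and
`x = f(e) ((1 - ε)⁻¹ x)` lies in the right ideal generated by `f(e)`.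
-/

open Filter Topology

noncomputable section

variable {A : Type*}

/-- The hereditary subalgebra `A_a`: the norm-closure of `{a * x * a : x ∈ A}`. -/
def herSub [NonUnitalCStarAlgebra A] (a : A) : Set A :=
  closure {y : A | ∃ x : A, y = a * x * a}

/-- The right ideal `E_a`: the norm-closure of `{a * x : x ∈ A}`. -/
def rightIdeal [NonUnitalCStarAlgebra A] (a : A) : Set A :=
  closure {y : A | ∃ x : A, y = a * x}

/-- Pedersen equivalence: `a = x* x` and `b = x x*` for some `x`. -/
def PedersenEquiv [NonUnitalCStarAlgebra A] (a b : A) : Prop :=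
  ∃ x : A, a = star x * x ∧ b = x * star x

/-- Blackadar equivalence `a ∼ₛ b`: there is `x ∈ A` with `A_a = A_{x*x}` and `A_b = A_{xx*}`. -/
def BlackadarEquiv [NonUnitalCStarAlgebra A] (a b : A) : Prop :=
  ∃ x : A, herSub a = herSub (star x * x) ∧ herSub b = herSub (x * star x)

/-- Blackadar subequivalence `a ≾ₛ b`: there is a positive `a' ∈ A_b` with `a ∼ₛ a'`. -/
def BlackadarLe [NonUnitalCStarAlgebra A] [PartialOrder A] (a b : A) : Prop :=
  ∃ a' : A, 0 ≤ a' ∧ a' ∈ herSub b ∧ BlackadarEquiv a a'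

/-- Cuntz subequivalence `a ≾ b`: there is a sequence `xₙ` with `‖xₙ* b xₙ - a‖ → 0`. -/
def CuntzLe [NonUnitalCStarAlgebra A] (a b : A) : Prop :=
  ∃ x : ℕ → A, Tendsto (fun n => ‖star (x n) * b * x n - a‖) atTop (𝓝 0)

/-- Cuntz equivalence `a ≈ b`. -/
def CuntzEquiv [NonUnitalCStarAlgebra A] (a b : A) : Prop :=
  CuntzLe a b ∧ CuntzLe b a

/-- Compact containment `a ⊂⊂ b`: there is a positive `e ∈ A_b` with `e * a = a`. -/
def CpctContained [NonUnitalCStarAlgebra A] [PartialOrder A] (a b : A) : Prop :=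
  ∃ e : A, 0 ≤ e ∧ e ∈ herSub b ∧ e * a = a

def cutFactor (ε t : ℝ) : ℝ :=
  (1 - ε) * min t ε / (1 - min t ε)

lemma continuous_cutFactor {ε : ℝ} (hε : ε < 1) : Continuous (cutFactor ε) := by
  refine Continuous.div (by fun_prop) (by fun_prop) fun t ↦ ?_
  have : min t ε ≤ ε := min_le_right t ε
  linarith

lemma cutFactor_zero {ε : ℝ} (hε : 0 ≤ ε) : cutFactor ε 0 = 0 := by
  simp [cutFactor, min_eq_left hε]

lemma max_sub_eq_mul_add_cutFactor {ε : ℝ} (hε : ε < 1) (t : ℝ) :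
    max (t - ε) 0 = (1 - ε) * t + (cutFactor ε t * t - cutFactor ε t) := by
  have hε' : 1 - ε ≠ 0 := by linarith
  rcases le_total t ε with h | h
  · have ht : 1 - t ≠ 0 := by linarith
    rw [cutFactor, min_eq_left h, max_eq_right (by linarith)]
    field_simp
    ring
  · rw [cutFactor, min_eq_right h, max_eq_left (by linarith)]
    field_simp
    ring

section FunctionalCalculus

variable {R : Type*} {p : A → Prop} [CommRing R] [Nontrivial R] [StarRing R] [MetricSpace R]
  [IsTopologicalRing R] [ContinuousStar R] [TopologicalSpace A] [NonUnitalRing A] [StarRing A]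
  [Module R A] [IsScalarTower R A A] [SMulCommClass R A A]
  [NonUnitalContinuousFunctionalCalculus R A p]

lemma cfcₙ_mul_id_sub_mul_eq_zero {g : R → R} (hg : Continuous g) (hg0 : g 0 = 0)
    {e x : A} (he : p e) (hx : e * x = x) :
    cfcₙ (fun t ↦ g t * t - g t) e * x = 0 := by
  rw [cfcₙ_sub (fun t ↦ g t * t) g e, cfcₙ_mul g (fun t ↦ t) e, cfcₙ_id' R e, sub_mul, mul_assoc,
    hx, sub_self]

end FunctionalCalculus

section CStarAlgebra

variable [NonUnitalCStarAlgebra A]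

lemma mul_mem_rightIdeal (c y : A) : c * y ∈ rightIdeal c :=
  subset_closure ⟨y, rfl⟩

lemma cfcₙ_max_sub_mul_of_mul_eq_self {ε : ℝ} (hε0 : 0 ≤ ε) (hε1 : ε < 1) {e x : A}
    (he : IsSelfAdjoint e) (hx : e * x = x) :
    cfcₙ (fun t : ℝ ↦ max (t - ε) 0) e * x = (1 - ε) • x := by
  have hk := continuous_cutFactor hε1
  have hk0 := cutFactor_zero hε0
  simp_rw [max_sub_eq_mul_add_cutFactor hε1]
  rw [cfcₙ_add (fun t ↦ (1 - ε) * t) _ e, cfcₙ_const_mul (1 - ε) (fun t ↦ t) e, cfcₙ_id' ℝ e,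
    add_mul, cfcₙ_mul_id_sub_mul_eq_zero hk hk0 he hx, smul_mul_assoc, hx, add_zero]

lemma mem_rightIdeal_cfcₙ_max_sub_of_mul_eq_self {ε : ℝ} (hε0 : 0 ≤ ε) (hε1 : ε < 1) {e x : A}
    (he : IsSelfAdjoint e) (hx : e * x = x) :
    x ∈ rightIdeal (cfcₙ (fun t : ℝ ↦ max (t - ε) 0) e) := by
  have hε : 1 - ε ≠ 0 := by linarith
  convert mul_mem_rightIdeal _ ((1 - ε)⁻¹ • x) using 1
  rw [mul_smul_comm, cfcₙ_max_sub_mul_of_mul_eq_self hε0 hε1 he hx, smul_smul, inv_mul_cancel₀ hε,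
    one_smul]

end CStarAlgebra

theorem subset_rightIdeal_cut_general [NonUnitalCStarAlgebra A] [PartialOrder A] [StarOrderedRing A]
    (e : A) (he : 0 ≤ e)
    (E' : Set A) (hE' : ∀ x ∈ E', e * x = x) :
    E' ⊆ rightIdeal (cfcₙ (fun t : ℝ => max (t - 1 / 2) 0) e) := fun x hx ↦
  mem_rightIdeal_cfcₙ_max_sub_of_mul_eq_self (by norm_num) (by norm_num) he.isSelfAdjoint
    (hE' x hx)

/-- if `e` is a positive element of `A_a` acting as the identity on `E'`,
then `E' ⊆ E_{(e - 1/2)₊}`. -/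
theorem subset_rightIdeal_cut [NonUnitalCStarAlgebra A] [PartialOrder A] [StarOrderedRing A]
    (a : A) (ha : 0 ≤ a) (e : A) (he : 0 ≤ e) (heA : e ∈ herSub a)
    (E' : Set A) (hE' : ∀ x ∈ E', e * x = x) :
    E' ⊆ rightIdeal (cfcₙ (fun t : ℝ => max (t - 1 / 2) 0) e) :=
  subset_rightIdeal_cut_general e he E' hE'
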